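/- Fix integers n, j, m ≥ 1 with j ≤ n, a composition (n_1,…,n_j) of n into j positive parts, a real α < 1, and real weights V(n,k) with V(n,j) ≠ 0 and V(n+m, j+k) ≠ 0 for all k ∈ {0,…,m}. Let 1 ≤ l ≤ n+m. Then the Bayesian nonparametric estimator of the probability of observing at step n+m+1 a species represented l times among the old species satisfies: ∑ (V(n+m+1,j+k)/V(n+m,j+k))·(l−α)·#{i ∈ {1,…,j} : n_i+m_i = l}·q(m_1,…,m_j; s_1,…,s_k; k) = (l−α)·∑_{i : n_i ≤ l ≤ n_i+m} binom(m, l−n_i)·(n_i−α)_{l−n_i}·∑_{k=0}^{m−l+n_i} (V(n+m+1,j+k)/V(n,j))·S(m−l+n_i, k; α, −(n−jα+α−n_i)), where the left sum ranges over all allocations consisting of nonnegative integers (m_1,…,m_j), an integer k ≥ 0 and positive integers (s_1,…,s_k) with ∑_{i=1}^{j} m_i + ∑_{i=1}^{k} s_i = m. -/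

import Mathlib

/-- Rising factorial `(x)_n = x(x+1)⋯(x+n−1)`. -/
noncomputable def risingFac (x : ℝ) (n : ℕ) : ℝ := ∏ i ∈ Finset.range n, (x + i)

/-- Rising factorial with increment `α`: `(x)_{n↑α} = ∏_{i<n} (x + iα)`. -/
noncomputable def risingFacInc (x α : ℝ) (n : ℕ) : ℝ := ∏ i ∈ Finset.range n, (x + i * α)

/-- Falling factorial `(x)_{[n]} = x(x−1)⋯(x−n+1)`. -/
noncomputable def fallingFac (x : ℝ) (n : ℕ) : ℝ := ∏ i ∈ Finset.range n, (x - i)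

/-- Compositions of `n` into `k` positive parts, as functions `Fin k → ℕ`. -/
def compositions (n k : ℕ) : Finset (Fin k → ℕ) :=
  (Fintype.piFinset fun _ => Finset.range (n + 1)).filter
    (fun f => (∀ i, 0 < f i) ∧ ∑ i, f i = n)

/-- Tuples of `k` nonnegative integers summing to `n`. -/
def weakCompositions (n k : ℕ) : Finset (Fin k → ℕ) :=
  (Fintype.piFinset fun _ => Finset.range (n + 1)).filter (fun f => ∑ i, f i = n)

/-- Generalized (central) Stirling number
`S(n,k;α) = (n!/k!) ∑_{(n_1,…,n_k)} ∏_j (1−α)_{n_j−1}/n_j!`,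
the sum over compositions of `n` into `k` positive parts. -/
noncomputable def genStirling (α : ℝ) (n k : ℕ) : ℝ :=
  (Nat.factorial n : ℝ) / (Nat.factorial k : ℝ) *
    ∑ f ∈ compositions n k, ∏ j, risingFac (1 - α) (f j - 1) / (Nat.factorial (f j) : ℝ)

/-- Non-central generalized Stirling number
`S(n,k;α,γ) = ∑_{s=k}^n C(n,s) S(s,k;α) (−γ)_{n−s}`. -/
noncomputable def genStirlingNC (α γ : ℝ) (n k : ℕ) : ℝ :=
  ∑ s ∈ Finset.Icc k n, (n.choose s : ℝ) * genStirling α s k * risingFac (-γ) (n - s)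

/-- The full conditional distribution weight
`q(m_1,…,m_j; s_1,…,s_k; k) = m!/(∏ s_i!·k!·∏ m_i!)·(V(n+m,j+k)/V(n,j))·
∏_i (n_i−α)_{m_i}·∏_i (1−α)_{s_i−1}`. -/
noncomputable def condFull (α : ℝ) (V : ℕ → ℕ → ℝ) (n j m : ℕ) (nv : Fin j → ℕ)
    (k : ℕ) (mv : Fin j → ℕ) (sv : Fin k → ℕ) : ℝ :=
  (Nat.factorial m : ℝ) /
      ((∏ i, (Nat.factorial (sv i) : ℝ)) * (Nat.factorial k : ℝ) *
        ∏ i, (Nat.factorial (mv i) : ℝ)) *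
    (V (n + m) (j + k) / V n j) *
    (∏ i, risingFac ((nv i : ℝ) - α) (mv i)) *
    ∏ i, risingFac (1 - α) (sv i - 1)

/-! Up to the factor `m! · V(n+m, j+k) / (V(n,j) · k!)`, the weight `q` is a product of the
exponential coefficients `(n_t-α)_{m_t} / m_t!` and `(1-α)_{s_i-1} / s_i!`. Count the old species
of size `l` one species `i` at a time and fix `m_i = l - n_i`, which splits off
`(n_i-α)_{m_i} / m_i!`. Grouping the remaining allocations by `u = ∑ s_i`, the old-species part
collapses by the multinomial Chu–Vandermonde identity
`(∑ a_t)_r / r! = ∑_{∑ f_t = r} ∏ (a_t)_{f_t} / f_t!`, and the new-species part is the defining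
sum of `S(u, k; α)`; summing over `u` gives `S(m - m_i, k; α, -∑_{t ≠ i} (n_t - α))`. -/

open Finset
open scoped Nat

theorem risingFac_zero (x : ℝ) : risingFac x 0 = 1 := by simp [risingFac]

theorem risingFac_succ (x : ℝ) (n : ℕ) : risingFac x (n + 1) = risingFac x n * (x + n) :=
  prod_range_succ _ _

theorem risingFac_zero_left_succ (n : ℕ) : risingFac 0 (n + 1) = 0 :=
  prod_eq_zero (mem_range.2 n.succ_pos) (by simp)

theorem risingFac_add (x y : ℝ) (n : ℕ) :
    risingFac (x + y) n =
      ∑ p ∈ antidiagonal n, (n.choose p.1 : ℝ) * (risingFac x p.1 * risingFac y p.2) := by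
  induction n with
  | zero => simp [risingFac_zero]
  | succ n ih =>
    rw [sum_antidiagonal_choose_succ_mul (fun i j => risingFac x i * risingFac y j),
      ← sum_add_distrib, risingFac_succ, ih, sum_mul]
    refine sum_congr rfl fun p hp => ?_
    obtain rfl := mem_antidiagonal.1 hp
    rw [Nat.choose_symm_add, risingFac_succ, risingFac_succ]
    push_cast
    ring

theorem risingFac_add_div_factorial (x y : ℝ) (n : ℕ) :
    risingFac (x + y) n / n ! =
      ∑ p ∈ antidiagonal n, risingFac x p.1 / p.1 ! * (risingFac y p.2 / p.2 !) := by
  rw [risingFac_add, sum_div]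
  refine sum_congr rfl fun p hp => ?_
  obtain rfl := mem_antidiagonal.1 hp
  rw [Nat.cast_add_choose]
  field_simp

theorem risingFac_sum_div_factorial {ι : Type*} [DecidableEq ι] (s : Finset ι) (a : ι → ℝ)
    (n : ℕ) :
    risingFac (∑ t ∈ s, a t) n / n ! =
      ∑ f ∈ s.piAntidiag n, ∏ t ∈ s, risingFac (a t) (f t) / (f t)! := by
  induction s using Finset.cons_induction generalizing n with
  | empty => cases n <;> simp [risingFac_zero, risingFac_zero_left_succ]
  | cons i s hi ih =>
    rw [sum_cons, risingFac_add_div_factorial, piAntidiag_cons, sum_disjiUnion]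
    refine sum_congr rfl fun p _ => ?_
    rw [ih, mul_sum, sum_map]
    refine sum_congr rfl fun f hf => ?_
    have hfi : f i = 0 := by_contra fun h => hi ((mem_piAntidiag.1 hf).2 i h)
    have hf_on_s : ∀ t ∈ s, t ≠ i := fun t ht h => hi (h ▸ ht)
    rw [prod_cons]
    simp only [addRightEmbedding_apply, Pi.add_apply, if_pos, hfi, zero_add]
    congr 1
    exact prod_congr rfl fun t ht => by simp [hf_on_s t ht]

theorem genStirlingNC_mul_factorial_div_factorial (α γ : ℝ) (r k : ℕ) :
    genStirlingNC α γ r k * k ! / r ! =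
      ∑ u ∈ Icc k r, (∑ g ∈ compositions u k, ∏ i, risingFac (1 - α) (g i - 1) / (g i)!) *
        (risingFac (-γ) (r - u) / (r - u)!) := by
  rw [genStirlingNC, sum_mul, sum_div]
  refine sum_congr rfl fun u hu => ?_
  rw [genStirling, Nat.cast_choose ℝ (mem_Icc.1 hu).2]
  field_simp

theorem genStirlingNC_eq_zero_of_lt (α γ : ℝ) {r k : ℕ} (h : r < k) :
    genStirlingNC α γ r k = 0 := by
  rw [genStirlingNC, Icc_eq_empty (by omega), sum_empty]

def allocations (ι : Type*) [Fintype ι] [DecidableEq ι] (k m : ℕ) :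
    Finset ((ι → ℕ) × (Fin k → ℕ)) :=
  ((Fintype.piFinset fun _ : ι => range (m + 1)) ×ˢ
      (Fintype.piFinset fun _ : Fin k => Icc 1 m)).filter
    (fun p => ∑ i, p.1 i + ∑ i, p.2 i = m)

/-- `q(m; s; k)` for the allocation `p = (m, s)`, divided by `m! · V(n+m, j+k) / (V(n,j) · k!)`,
with `a t` in place of `n_t - α`. -/
noncomputable def allocWeight {ι : Type*} [Fintype ι] (a : ι → ℝ) (α : ℝ) {k : ℕ}
    (p : (ι → ℕ) × (Fin k → ℕ)) : ℝ :=
  (∏ t, risingFac (a t) (p.1 t) / (p.1 t)!) * ∏ i, risingFac (1 - α) (p.2 i - 1) / (p.2 i)!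

section Allocations

variable {ι : Type*} [Fintype ι] [DecidableEq ι]

theorem mem_allocations {k m : ℕ} {p : (ι → ℕ) × (Fin k → ℕ)} :
    p ∈ allocations ι k m ↔ (∀ i, 0 < p.2 i) ∧ ∑ t, p.1 t + ∑ i, p.2 i = m := by
  have h1 := fun t => single_le_sum (fun t _ => Nat.zero_le (p.1 t)) (mem_univ t)
  have h2 := fun i => single_le_sum (fun i _ => Nat.zero_le (p.2 i)) (mem_univ i)
  simp only [allocations, mem_filter, mem_product, Fintype.mem_piFinset, mem_range, mem_Icc]
  constructor
  · rintro ⟨⟨-, hp2⟩, hsum⟩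
    exact ⟨fun i => (hp2 i).1, hsum⟩
  · rintro ⟨hpos, hsum⟩
    refine ⟨⟨fun t => ?_, fun i => ⟨hpos i, ?_⟩⟩, hsum⟩
    · have := h1 t; omega
    · have := h2 i; omega

theorem filter_allocations_sum_snd_eq {k m u : ℕ} (hu : u ≤ m) :
    (allocations ι k m).filter (fun p => ∑ i, p.2 i = u) =
      univ.piAntidiag (m - u) ×ˢ compositions u k := by
  ext ⟨f, g⟩
  have hg := fun i => single_le_sum (fun i _ => Nat.zero_le (g i)) (mem_univ i)
  simp only [mem_filter, mem_allocations, compositions, mem_product, Fintype.mem_piFinset,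
    mem_range, mem_piAntidiag, mem_univ, implies_true, and_true]
  change _ ↔ ∑ t, f t = m - u ∧ _
  constructor
  · rintro ⟨⟨hpos, hsum⟩, rfl⟩
    exact ⟨by omega, fun i => by have := hg i; omega, hpos, rfl⟩
  · rintro ⟨hfsum, -, hpos, rfl⟩
    exact ⟨⟨hpos, by omega⟩, rfl⟩

theorem le_sum_snd_of_mem_allocations {k m : ℕ} {p : (ι → ℕ) × (Fin k → ℕ)}
    (hp : p ∈ allocations ι k m) : k ≤ ∑ i, p.2 i := by
  calc k = ∑ _i : Fin k, 1 := by simp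
    _ ≤ ∑ i, p.2 i := sum_le_sum fun i _ => (mem_allocations.1 hp).1 i

theorem sum_allocWeight (a : ι → ℝ) (α : ℝ) (k r : ℕ) :
    ∑ p ∈ allocations ι k r, allocWeight a α p = genStirlingNC α (-∑ t, a t) r k * k ! / r ! := by
  have hmaps : ∀ p ∈ allocations ι k r, ∑ i, p.2 i ∈ Icc k r := fun p hp =>
    mem_Icc.2 ⟨le_sum_snd_of_mem_allocations hp, by have := (mem_allocations.1 hp).2; omega⟩
  rw [genStirlingNC_mul_factorial_div_factorial, neg_neg, ← sum_fiberwise_of_maps_to hmaps]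
  refine sum_congr rfl fun u hu => ?_
  rw [filter_allocations_sum_snd_eq (mem_Icc.1 hu).2, sum_product, mul_comm,
    risingFac_sum_div_factorial, sum_mul_sum]
  rfl

theorem sum_allocWeight_filter_fst_apply_eq (a : ι → ℝ) (α : ℝ) (k : ℕ) {m d : ℕ} (hd : d ≤ m)
    (i : ι) :
    ∑ p ∈ (allocations ι k m).filter (fun p => p.1 i = d), allocWeight a α p =
      risingFac (a i) d / d ! *
        (genStirlingNC α (-∑ t : {t // t ≠ i}, a t) (m - d) k * k ! / (m - d)!) := by
  rw [← sum_allocWeight, mul_sum]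
  refine sum_nbij' (fun p => (fun t => p.1 t, p.2))
    (fun q => (fun t => if h : t = i then d else q.1 ⟨t, h⟩, q.2)) ?_ ?_ ?_ ?_ ?_
  · rintro ⟨f, g⟩ hp
    simp only [mem_filter, mem_allocations, Fintype.sum_eq_add_sum_subtype_ne _ i] at hp ⊢
    exact ⟨hp.1.1, by omega⟩
  · rintro ⟨f, g⟩ hq
    have hext : ∀ t : {t // t ≠ i}, (if h : (t : ι) = i then d else f ⟨t, h⟩) = f t :=
      fun t => dif_neg t.2
    simp only [mem_filter, mem_allocations, Fintype.sum_eq_add_sum_subtype_ne _ i, dite_true,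
      hext] at hq ⊢
    exact ⟨⟨hq.1, by omega⟩, trivial⟩
  · rintro ⟨f, g⟩ hp
    simp only [mem_filter] at hp
    ext t <;> simp only
    split_ifs with h
    · exact h ▸ hp.2.symm
    · rfl
  · rintro ⟨f, g⟩ -
    ext t <;> simp [t.2]
  · rintro ⟨f, g⟩ hp
    simp only [mem_filter] at hp
    simp only [allocWeight, Fintype.prod_eq_mul_prod_subtype_ne _ i, hp.2]
    ring

theorem sum_range_mul_sum_filter_allocWeight (a : ι → ℝ) (α : ℝ) (c : ℕ → ℝ) {m d : ℕ}
    (hd : d ≤ m) (i : ι) :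
    ∑ k ∈ range (m + 1), c k * (m ! / k !) *
        ∑ p ∈ (allocations ι k m).filter (fun p => p.1 i = d), allocWeight a α p =
      m.choose d * risingFac (a i) d *
        ∑ k ∈ range (m - d + 1), c k * genStirlingNC α (-∑ t : {t // t ≠ i}, a t) (m - d) k := by
  calc
    _ = ∑ k ∈ range (m + 1), m.choose d * risingFac (a i) d *
        (c k * genStirlingNC α (-∑ t : {t // t ≠ i}, a t) (m - d) k) := by
      refine sum_congr rfl fun k _ => ?_
      rw [sum_allocWeight_filter_fst_apply_eq a α k hd i, Nat.cast_choose ℝ hd]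
      field_simp
    _ = _ := by
      rw [mul_sum]
      refine (sum_subset (range_subset_range.2 (by omega)) fun k _ hk => ?_).symm
      rw [genStirlingNC_eq_zero_of_lt _ _ (by simpa using hk), mul_zero, mul_zero]
end Allocations

theorem sum_natCast_card_filter_mul {β γ R : Type*} [CommSemiring R] (s : Finset β)
    (t : Finset γ) (P : γ → β → Prop) [∀ i p, Decidable (P i p)] (f : β → R) :
    ∑ p ∈ s, ((t.filter (P · p)).card : R) * f p = ∑ i ∈ t, ∑ p ∈ s.filter (P i), f p := by
  simp_rw [card_filter, Nat.cast_sum, sum_mul, Nat.cast_ite, ite_mul, Nat.cast_one,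
    Nat.cast_zero, one_mul, zero_mul, sum_filter]
  exact sum_comm

theorem div_mul_condFull_eq {α : ℝ} {V : ℕ → ℕ → ℝ} {n j m k : ℕ}
    (hV : V (n + m) (j + k) ≠ 0) (x : ℝ) (nv mv : Fin j → ℕ) (sv : Fin k → ℕ) :
    x / V (n + m) (j + k) * condFull α V n j m nv k mv sv =
      x / V n j * (m ! / k !) * allocWeight (fun t => (nv t : ℝ) - α) α (mv, sv) := by
  have hmv : ∏ t, ((mv t)! : ℝ) ≠ 0 := prod_ne_zero_iff.2 fun t _ => by positivity
  have hsv : ∏ i, ((sv i)! : ℝ) ≠ 0 := prod_ne_zero_iff.2 fun i _ => by positivity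
  simp only [condFull, allocWeight, prod_div_distrib]
  field_simp

theorem bayes_estimator_old_species_size_l_general (n j m : ℕ) (nv : Fin j → ℕ) (hsum : ∑ i, nv i = n)
    (α : ℝ) (V : ℕ → ℕ → ℝ) (hV2 : ∀ k ∈ Finset.range (m + 1), V (n + m) (j + k) ≠ 0) (l : ℕ) :
    ∑ k ∈ Finset.range (m + 1),
        ∑ p ∈ ((Fintype.piFinset fun _ : Fin j => Finset.range (m + 1)) ×ˢ
              (Fintype.piFinset fun _ : Fin k => Finset.Icc 1 m)).filter
            (fun p => ∑ i, p.1 i + ∑ i, p.2 i = m),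
          V (n + m + 1) (j + k) / V (n + m) (j + k) * ((l : ℝ) - α) *
            (((Finset.univ.filter fun i => nv i + p.1 i = l).card : ℕ) : ℝ) *
            condFull α V n j m nv k p.1 p.2 =
      ((l : ℝ) - α) *
        ∑ i ∈ Finset.univ.filter (fun i => nv i ≤ l ∧ l ≤ nv i + m),
          (m.choose (l - nv i) : ℝ) * risingFac ((nv i : ℝ) - α) (l - nv i) *
            ∑ k ∈ Finset.range (m + nv i - l + 1),
              (V (n + m + 1) (j + k) / V n j) *
                genStirlingNC α (-((n : ℝ) - j * α + α - nv i)) (m + nv i - l) k := by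
  set a : Fin j → ℝ := fun t => (nv t : ℝ) - α
  have hγ : ∀ i, ∑ t : {t // t ≠ i}, a t = n - j * α + α - nv i := fun i => by
    have h : ∑ t, a t = n - j * α := by simp [a, sum_sub_distrib, ← hsum]
    rw [Fintype.sum_eq_add_sum_subtype_ne a i] at h
    linarith [show a i = nv i - α from rfl]
  calc
    _ = ((l : ℝ) - α) * ∑ i, ∑ k ∈ range (m + 1), V (n + m + 1) (j + k) / V n j * (m ! / k !) *
        ∑ p ∈ (allocations (Fin j) k m).filter (fun p => nv i + p.1 i = l), allocWeight a α p := by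
      rw [sum_comm, mul_sum]
      refine sum_congr rfl fun k hk => ?_
      simp_rw [← mul_sum, ← sum_natCast_card_filter_mul, mul_sum]
      refine sum_congr rfl fun p _ => ?_
      linear_combination ((l : ℝ) - α) * ((univ.filter fun t => nv t + p.1 t = l).card : ℝ) *
        div_mul_condFull_eq (hV2 k hk) (V (n + m + 1) (j + k)) nv p.1 p.2
    _ = _ := by
      rw [sum_filter]
      congr 1
      refine sum_congr rfl fun i _ => ?_
      split_ifs with hl
      · obtain ⟨d, rfl⟩ : ∃ d, l = nv i + d := ⟨l - nv i, by omega⟩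
        simp_rw [Nat.add_left_cancel_iff]
        rw [sum_range_mul_sum_filter_allocWeight a α _ (by omega) i, hγ,
          Nat.add_sub_cancel_left, show m + nv i - (nv i + d) = m - d by omega]
      · refine sum_eq_zero fun k _ => ?_
        rw [filter_eq_empty_iff.2 fun p hp hpl => hl ⟨by omega, ?_⟩, sum_empty, mul_zero]
        have := single_le_sum (fun t _ => Nat.zero_le (p.1 t)) (mem_univ i)
        have := (mem_allocations.1 hp).2
        omega

/-- Bayesian nonparametric estimator of the probability of observing at step
`n+m+1` a species represented `l` times among the old species. -/
theorem bayes_estimator_old_species_size_l (n j m : ℕ) (hn : 1 ≤ n) (hj : 1 ≤ j)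
    (hm : 1 ≤ m) (hjn : j ≤ n)
    (nv : Fin j → ℕ) (hnv : ∀ i, 0 < nv i) (hsum : ∑ i, nv i = n)
    (α : ℝ) (hα : α < 1) (V : ℕ → ℕ → ℝ) (hV : V n j ≠ 0)
    (hV2 : ∀ k ∈ Finset.range (m + 1), V (n + m) (j + k) ≠ 0)
    (l : ℕ) (hl : 1 ≤ l) (hln : l ≤ n + m) :
    ∑ k ∈ Finset.range (m + 1),
        ∑ p ∈ ((Fintype.piFinset fun _ : Fin j => Finset.range (m + 1)) ×ˢ
              (Fintype.piFinset fun _ : Fin k => Finset.Icc 1 m)).filter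
            (fun p => ∑ i, p.1 i + ∑ i, p.2 i = m),
          V (n + m + 1) (j + k) / V (n + m) (j + k) * ((l : ℝ) - α) *
            (((Finset.univ.filter fun i => nv i + p.1 i = l).card : ℕ) : ℝ) *
            condFull α V n j m nv k p.1 p.2 =
      ((l : ℝ) - α) *
        ∑ i ∈ Finset.univ.filter (fun i => nv i ≤ l ∧ l ≤ nv i + m),
          (m.choose (l - nv i) : ℝ) * risingFac ((nv i : ℝ) - α) (l - nv i) *
            ∑ k ∈ Finset.range (m + nv i - l + 1),
              (V (n + m + 1) (j + k) / V n j) *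
                genStirlingNC α (-((n : ℝ) - j * α + α - nv i)) (m + nv i - l) k :=
  bayes_estimator_old_species_size_l_general n j m nv hsum α V hV2 l
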